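/- arXiv:1812.07064 — 5 statements merged into one kernel-verified Lean document; each statement's English description precedes it below -/
import Mathlib

section
/- For all real numbers a, b > 0, the inequality (a - b)(log a - log b) ≥ 4(√a - √b)² holds. -/
/-! With `x = √a` and `y = √b` one has `a - b = (x - y)(x + y)` and `log a - log b = 2 (log x - log y)`,
so the claim is `(x - y)(log x - log y) ≥ 2 (x - y)² / (x + y)`: the logarithmic mean of `x` and `y`
is at most their arithmetic mean. For `y ≤ x` this is `log (1 + s) ≥ 2 s / (s + 2)` with
`s = (x - y) / y`, the first term of the series `log (1 + s) = 2 ∑ (s / (s + 2)) ^ (2k+1) / (2k+1)`. -/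

namespace Real

theorem two_mul_div_add_two_le_log_one_add {s : ℝ} (hs : 0 ≤ s) :
    2 * (s / (s + 2)) ≤ log (1 + s) := by
  simpa using le_hasSum (hasSum_log_one_add hs) 0 fun k _ => by positivity

theorem two_mul_sub_div_add_le_log_sub_log {x y : ℝ} (hy : 0 < y) (hyx : y ≤ x) :
    2 * (x - y) / (x + y) ≤ log x - log y := by
  have hs : 0 ≤ (x - y) / y := div_nonneg (sub_nonneg.2 hyx) hy.le
  have hx : 0 < x := hy.trans_le hyx
  have hden : (x - y) / y + 2 = (x + y) / y := by field_simp; ring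
  calc 2 * (x - y) / (x + y) = 2 * ((x - y) / y / ((x - y) / y + 2)) := by
        rw [hden, div_div_div_cancel_right₀ hy.ne', mul_div_assoc]
    _ ≤ log (1 + (x - y) / y) := two_mul_div_add_two_le_log_one_add hs
    _ = log x - log y := by rw [← log_div hx.ne' hy.ne']; congr 1; field_simp; ring

theorem two_mul_sq_sub_le_add_mul_sub_mul_log_sub_log {x y : ℝ} (hx : 0 < x) (hy : 0 < y) :
    2 * (x - y) ^ 2 ≤ (x + y) * ((x - y) * (log x - log y)) := by
  wlog hyx : y ≤ x generalizing x y
  · have h := this hy hx (le_of_not_ge hyx)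
    linarith
  have hlog := two_mul_sub_div_add_le_log_sub_log hy hyx
  rw [div_le_iff₀ (by positivity)] at hlog
  linear_combination (x - y) * hlog

end Real

theorem log_mean_sqrt_ineq (a b : ℝ) (ha : 0 < a) (hb : 0 < b) :
    (a - b) * (Real.log a - Real.log b) ≥ 4 * (Real.sqrt a - Real.sqrt b) ^ 2 := by
  obtain ⟨x, hx, rfl⟩ : ∃ x, 0 < x ∧ x ^ 2 = a := ⟨√a, Real.sqrt_pos.2 ha, Real.sq_sqrt ha.le⟩
  obtain ⟨y, hy, rfl⟩ : ∃ y, 0 < y ∧ y ^ 2 = b := ⟨√b, Real.sqrt_pos.2 hb, Real.sq_sqrt hb.le⟩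
  rw [Real.sqrt_sq hx.le, Real.sqrt_sq hy.le, Real.log_pow, Real.log_pow]
  push_cast
  linear_combination 2 * Real.two_mul_sq_sub_le_add_mul_sub_mul_log_sub_log hx hy
end

section
/- Define φ(x,y) = (x(log x − log y) − (x − y)) / (√x − √y)² for x, y > 0, x ≠ y, and φ(y,y) = 2. Then for each fixed x > 0, the function y ↦ φ(x,y) is strictly decreasing on (0,∞). -/
noncomputable def phi (x y : ℝ) : ℝ :=
  if x = y then 2
  else (x * (Real.log x - Real.log y) - (x - y)) / (Real.sqrt x - Real.sqrt y) ^ 2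

/-!
Since `phi` is homogeneous of degree zero, `phi x y = phi 1 (t ^ 2)` with `t = √(y / x)`, and for
`t ≠ 1` this is `g t = (t ^ 2 - 1 - 2 log t) / (t - 1) ^ 2`. Now `g'` has the sign of
`(t - 1) (t⁻¹ - t + 2 log t)` and `g t - 2` that of `2 (t - 1) - (t - 1) ^ 2 - 2 log t`. Both
`t⁻¹ - t + 2 log t` and `2 (t - 1) - (t - 1) ^ 2 - 2 log t` vanish at `1` and have derivatives
`-(t - 1) ^ 2 / t ^ 2` and `-2 (t - 1) ^ 2 / t`, so they decrease. Hence `g` decreases on `(0, 1)`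
and on `(1, ∞)`, staying above `2` on the first and below `2` on the second, and the two branches
glue at `phi 1 1 = 2`.
-/

open Real Set

theorem StrictAntiOn.sub_mul_neg {R : Type*} [Ring R] [LinearOrder R] [IsStrictOrderedRing R]
    {f : R → R} {s : Set R} {c t : R} (hf : StrictAntiOn f s)
    (hc : c ∈ s) (hfc : f c = 0) (ht : t ∈ s) (htc : t ≠ c) : (t - c) * f t < 0 := by
  rcases htc.lt_or_gt with h | h
  · exact mul_neg_of_neg_of_pos (sub_neg.2 h) (hfc ▸ hf ht hc h)
  · exact mul_neg_of_pos_of_neg (sub_pos.2 h) (hfc ▸ hf hc ht h)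

theorem strictAntiOn_Ioi_of_Ioo_of_Ioi {α β : Type*} [LinearOrder α] [Preorder β] {f : α → β}
    {a c : α} (h₁ : StrictAntiOn f (Ioo a c)) (h₂ : StrictAntiOn f (Ioi c))
    (hlt : ∀ t ∈ Ioo a c, f c < f t) (hgt : ∀ t ∈ Ioi c, f t < f c) :
    StrictAntiOn f (Ioi a) := by
  intro u hu v hv huv
  rcases lt_trichotomy v c with hvc | rfl | hcv
  · exact h₁ ⟨hu, huv.trans hvc⟩ ⟨hv, hvc⟩ huv
  · exact hlt u ⟨hu, huv⟩
  rcases lt_trichotomy u c with huc | rfl | hcu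
  · exact (hgt v hcv).trans (hlt u ⟨hu, huc⟩)
  · exact hgt v hcv
  · exact h₂ hcu hcv huv

theorem strictAntiOn_Ioi_of_hasDerivAt {f f' : ℝ → ℝ} {a c : ℝ} (hac : a < c)
    (hf : ∀ t ∈ Ioi a, HasDerivAt f (f' t) t) (hf' : ∀ t ∈ Ioi a, t ≠ c → f' t < 0) :
    StrictAntiOn f (Ioi a) := by
  have hcont : ContinuousOn f (Ioi a) := fun t ht => (hf t ht).continuousAt.continuousWithinAt
  have piece : ∀ s ⊆ Ioi a, Convex ℝ s → c ∉ interior s → StrictAntiOn f s :=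
    fun s hs hconv hcs => strictAntiOn_of_deriv_neg hconv (hcont.mono hs) fun t ht => by
      rw [(hf t (hs (interior_subset ht))).deriv]
      exact hf' t (hs (interior_subset ht)) (ne_of_mem_of_not_mem ht hcs)
  rw [← Ioc_union_Ici_eq_Ioi hac]
  refine (piece _ Ioc_subset_Ioi_self (convex_Ioc a c) ?_).union
    (piece _ (Ici_subset_Ioi.2 hac) (convex_Ici c) ?_) (isGreatest_Ioc hac) isLeast_Ici
  · simp
  · simp

theorem phi_mul_mul {c x y : ℝ} (hc : 0 < c) (hx : x ≠ 0) (hy : y ≠ 0) :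
    phi (c * x) (c * y) = phi x y := by
  simp only [phi, mul_right_inj' hc.ne']
  split_ifs
  · rfl
  have hden : (√c * √x - √c * √y) ^ 2 = c * (√x - √y) ^ 2 := by
    rw [← mul_sub, mul_pow, sq_sqrt hc.le]
  rw [log_mul hc.ne' hx, log_mul hc.ne' hy, sqrt_mul hc.le, sqrt_mul hc.le, hden]
  convert mul_div_mul_left (x * (log x - log y) - (x - y)) ((√x - √y) ^ 2) hc.ne' using 2
  ring

noncomputable def phiOneSq (t : ℝ) : ℝ := (t ^ 2 - 1 - 2 * log t) / (t - 1) ^ 2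

theorem phi_one_sq {t : ℝ} (ht : 0 < t) (ht1 : t ≠ 1) : phi 1 (t ^ 2) = phiOneSq t := by
  have : (1 : ℝ) ≠ t ^ 2 := fun h => ht1 (by nlinarith)
  rw [phi, if_neg this, log_one, log_pow, sqrt_one, sqrt_sq ht.le, phiOneSq]
  push_cast
  congr 1 <;> ring

theorem sub_one_mul_inv_sub_add_two_mul_log_neg {t : ℝ} (ht : 0 < t) (ht1 : t ≠ 1) :
    (t - 1) * (t⁻¹ - t + 2 * log t) < 0 := by
  refine StrictAntiOn.sub_mul_neg (f := fun t => t⁻¹ - t + 2 * log t) ?_ (mem_Ioi.2 one_pos)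
    (by simp) ht ht1
  refine strictAntiOn_Ioi_of_hasDerivAt one_pos (f' := fun t => -(t - 1) ^ 2 / t ^ 2)
    (fun t ht => ?_) (fun t ht ht1 => ?_)
  · have ht0 : t ≠ 0 := ht.ne'
    refine (((hasDerivAt_inv ht0).sub (hasDerivAt_id t)).add
      ((hasDerivAt_log ht0).const_mul 2)).congr_deriv ?_
    field_simp
    ring
  · exact div_neg_of_neg_of_pos (neg_neg_of_pos (pow_two_pos_of_ne_zero (sub_ne_zero.2 ht1)))
      (pow_pos ht 2)

theorem sub_one_mul_taylor_log_neg {t : ℝ} (ht : 0 < t) (ht1 : t ≠ 1) :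
    (t - 1) * (2 * (t - 1) - (t - 1) ^ 2 - 2 * log t) < 0 := by
  refine StrictAntiOn.sub_mul_neg (f := fun t => 2 * (t - 1) - (t - 1) ^ 2 - 2 * log t) ?_
    (mem_Ioi.2 one_pos) (by simp) ht ht1
  refine strictAntiOn_Ioi_of_hasDerivAt one_pos (f' := fun t => -2 * (t - 1) ^ 2 / t)
    (fun t ht => ?_) (fun t ht ht1 => ?_)
  · have ht0 : t ≠ 0 := ht.ne'
    refine ((((hasDerivAt_id' t).sub_const 1).const_mul 2).sub
      (((hasDerivAt_id' t).sub_const 1).pow 2)).sub ((hasDerivAt_log ht0).const_mul 2)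
      |>.congr_deriv ?_
    field_simp
    ring
  · exact div_neg_of_neg_of_pos (by nlinarith [pow_two_pos_of_ne_zero (sub_ne_zero.2 ht1)]) ht

theorem hasDerivAt_phiOneSq {t : ℝ} (ht : 0 < t) (ht1 : t ≠ 1) :
    HasDerivAt phiOneSq (2 * ((t - 1) * (t⁻¹ - t + 2 * log t)) / ((t - 1) ^ 2) ^ 2) t := by
  have hnum : HasDerivAt (fun s => s ^ 2 - 1 - 2 * log s) (2 * t - 2 * t⁻¹) t := by
    refine (((hasDerivAt_pow 2 t).sub_const 1).sub
      ((hasDerivAt_log ht.ne').const_mul 2)).congr_deriv ?_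
    ring
  have hden : HasDerivAt (fun s => (s - 1) ^ 2) (2 * (t - 1)) t := by
    refine (((hasDerivAt_id' t).sub_const 1).pow 2).congr_deriv ?_
    ring
  refine (hnum.div hden (pow_ne_zero 2 (sub_ne_zero.2 ht1))).congr_deriv ?_
  field_simp
  ring

theorem strictAntiOn_phiOneSq {s : Set ℝ} (hs : Convex ℝ s) (hs0 : s ⊆ Ioi 0) (hs1 : 1 ∉ s) :
    StrictAntiOn phiOneSq s := by
  have hderiv : ∀ t ∈ s, HasDerivAt phiOneSq _ t := fun t ht =>
    hasDerivAt_phiOneSq (hs0 ht) (ne_of_mem_of_not_mem ht hs1)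
  refine strictAntiOn_of_deriv_neg hs (fun t ht => (hderiv t ht).continuousAt.continuousWithinAt)
    fun t ht => ?_
  have ht' := interior_subset ht
  have ht1 := ne_of_mem_of_not_mem ht' hs1
  rw [(hderiv t ht').deriv]
  exact div_neg_of_neg_of_pos
    (mul_neg_of_pos_of_neg two_pos (sub_one_mul_inv_sub_add_two_mul_log_neg (hs0 ht') ht1))
    (pow_pos (pow_two_pos_of_ne_zero (sub_ne_zero.2 ht1)) 2)

theorem sub_one_mul_phiOneSq_sub_two_neg {t : ℝ} (ht : 0 < t) (ht1 : t ≠ 1) :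
    (t - 1) * (phiOneSq t - 2) < 0 := by
  have hsq := pow_two_pos_of_ne_zero (sub_ne_zero.2 ht1)
  have : phiOneSq t - 2 = (2 * (t - 1) - (t - 1) ^ 2 - 2 * log t) / (t - 1) ^ 2 := by
    rw [phiOneSq]
    field_simp
    ring
  rw [this, ← mul_div_assoc]
  exact div_neg_of_neg_of_pos (sub_one_mul_taylor_log_neg ht ht1) hsq

theorem strictAntiOn_phi_one_sq : StrictAntiOn (fun t => phi 1 (t ^ 2)) (Ioi 0) := by
  have hone : phi 1 (1 ^ 2) = 2 := by simp [phi]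
  have heq : ∀ s ⊆ Ioi 0, 1 ∉ s → EqOn phiOneSq (fun t => phi 1 (t ^ 2)) s :=
    fun s hs0 hs1 t ht => (phi_one_sq (hs0 ht) (ne_of_mem_of_not_mem ht hs1)).symm
  refine strictAntiOn_Ioi_of_Ioo_of_Ioi (c := 1) ?_ ?_ (fun t ht => ?_) (fun t ht => ?_)
  · exact (strictAntiOn_phiOneSq (convex_Ioo 0 1) Ioo_subset_Ioi_self (by simp)).congr
      (heq _ Ioo_subset_Ioi_self (by simp))
  · have hs0 : Ioi (1 : ℝ) ⊆ Ioi 0 := Ioi_subset_Ioi zero_le_one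
    exact (strictAntiOn_phiOneSq (convex_Ioi 1) hs0 (by simp)).congr (heq _ hs0 (by simp))
  · have := sub_one_mul_phiOneSq_sub_two_neg ht.1 ht.2.ne
    simp only [hone, phi_one_sq ht.1 ht.2.ne]
    linarith [pos_of_mul_neg_right this (sub_nonpos.2 ht.2.le)]
  · have := sub_one_mul_phiOneSq_sub_two_neg (zero_lt_one.trans ht) ht.ne'
    simp only [hone, phi_one_sq (zero_lt_one.trans ht) ht.ne']
    linarith [neg_of_mul_neg_right this (sub_nonneg.2 (le_of_lt ht))]

theorem phi_strictAntiOn_snd (x : ℝ) (hx : 0 < x) :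
    StrictAntiOn (fun y => phi x y) (Set.Ioi 0) := by
  have hmono : StrictMonoOn (fun y => √(y / x)) (Ioi 0) := fun a ha b _ hab =>
    sqrt_lt_sqrt (div_pos ha hx).le (div_lt_div_of_pos_right hab hx)
  have hmaps : MapsTo (fun y => √(y / x)) (Ioi 0) (Ioi 0) := fun y hy =>
    sqrt_pos.2 (div_pos hy hx)
  refine (strictAntiOn_phi_one_sq.comp_strictMonoOn hmono hmaps).congr fun y hy => ?_
  have hyx := div_pos hy hx
  rw [Function.comp_apply, sq_sqrt hyx.le, ← phi_mul_mul hx one_ne_zero hyx.ne', mul_one,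
    mul_div_cancel₀ _ hx.ne']
end

section
/- Define φ(x,y) = (x(log x − log y) − (x − y)) / (√x − √y)² for x, y > 0, x ≠ y, and φ(y,y) = 2. Then for each fixed y > 0, the function x ↦ φ(x,y) is strictly increasing on (0,∞). -/
/-!
Substituting `t = √x / √y` turns `x ↦ φ(x, y)` into
`f t = (2 t² log t - t² + 1) / (t - 1)²` (`phiRatio`), with `f 1 = 2`. Away from `t = 1`,
`f' t = 2 G t / (t - 1)³` with `G t = t² - 1 - 2 t log t`, and `f t - 2 = H t / (t - 1)²` with
`H t = 2 t² log t - 3 t² + 4 t - 1`. Both `G` and `H` vanish at `1` and are increasing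
(`G' t = 2 (t - 1 - log t)`, `H' t = 4 (t log t - t + 1)`), so they have the sign of `t - 1`.
Hence `f` increases on `(0, 1)` and on `(1, ∞)`, staying below `2` on the first branch and above
`2` on the second.
-/

open Real Set

lemma sub_one_lt_mul_log {t : ℝ} (ht : 0 < t) (ht1 : t ≠ 1) : t - 1 < t * log t := by
  have h := log_lt_sub_one_of_pos (inv_pos.2 ht) (inv_ne_one.2 ht1)
  rw [log_inv] at h
  have h' := mul_lt_mul_of_pos_left h ht
  rw [mul_sub, mul_inv_cancel₀ ht.ne'] at h'
  linarith

lemma strictMonoOn_of_hasDerivAt_pos_of_isOpen {D : Set ℝ} (hD : Convex ℝ D) (hDo : IsOpen D)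
    {g g' : ℝ → ℝ} (hg : ∀ x ∈ D, HasDerivAt g (g' x) x) (hpos : ∀ x ∈ D, 0 < g' x) :
    StrictMonoOn g D :=
  strictMonoOn_of_hasDerivWithinAt_pos hD (fun x hx => (hg x hx).continuousAt.continuousWithinAt)
    (fun x hx => by rw [hDo.interior_eq] at hx ⊢; exact (hg x hx).hasDerivWithinAt)
    (fun x hx => hpos x (interior_subset hx))

lemma strictMonoOn_Ioi_of_hasDerivAt_pos_of_ne {g g' : ℝ → ℝ} {c a : ℝ} (hca : c < a)
    (hg : ∀ x ∈ Ioi c, HasDerivAt g (g' x) x) (hpos : ∀ x ∈ Ioi c, x ≠ a → 0 < g' x) :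
    StrictMonoOn g (Ioi c) := by
  have hcont : ContinuousOn g (Ioi c) := fun x hx => (hg x hx).continuousAt.continuousWithinAt
  have hderiv : ∀ x ∈ Ioi c, x ≠ a → 0 < deriv g x := fun x hx hxa =>
    (hg x hx).deriv ▸ hpos x hx hxa
  have hleft : StrictMonoOn g (Ioc c a) :=
    strictMonoOn_of_deriv_pos (convex_Ioc c a) (hcont.mono Ioc_subset_Ioi_self) fun x hx => by
      rw [interior_Ioc] at hx
      exact hderiv x hx.1 hx.2.ne
  have hright : StrictMonoOn g (Ici a) :=
    strictMonoOn_of_deriv_pos (convex_Ici a) (hcont.mono (Ici_subset_Ioi.2 hca)) fun x hx => by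
      rw [interior_Ici] at hx
      exact hderiv x (hca.trans hx) hx.ne'
  rw [← Ioc_union_Ici_eq_Ioi hca]
  exact hleft.union hright (isGreatest_Ioc hca) isLeast_Ici

lemma strictMonoOn_Ioi_of_Ioo_of_Ioi {α β : Type*} [LinearOrder α] [Preorder β] {f : α → β}
    {c a : α} (hca : c < a) (hleft : StrictMonoOn f (Ioo c a)) (hright : StrictMonoOn f (Ioi a))
    (hlt : ∀ x ∈ Ioo c a, f x < f a) (hgt : ∀ x ∈ Ioi a, f a < f x) :
    StrictMonoOn f (Ioi c) := by
  have hIoc : StrictMonoOn f (Ioc c a) := by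
    intro x hx y hy hxy
    rcases hy.2.lt_or_eq with hya | rfl
    · exact hleft ⟨hx.1, hxy.trans hya⟩ ⟨hy.1, hya⟩ hxy
    · exact hlt x ⟨hx.1, hxy⟩
  have hIci : StrictMonoOn f (Ici a) := by
    intro x hx y hy hxy
    rcases hx.lt_or_eq with hax | rfl
    · exact hright hax (hax.trans hxy) hxy
    · exact hgt y hxy
  rw [← Ioc_union_Ici_eq_Ioi hca]
  exact hIoc.union hIci (isGreatest_Ioc hca) isLeast_Ici

lemma strictMonoOn_sq_sub_one_sub_mul_log :
    StrictMonoOn (fun t => t ^ 2 - 1 - 2 * t * log t) (Ioi 0) := by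
  refine strictMonoOn_Ioi_of_hasDerivAt_pos_of_ne one_pos (g' := fun t => 2 * (t - 1 - log t))
    (fun t ht => ?_) fun t ht ht1 => by linarith [log_lt_sub_one_of_pos ht ht1]
  have ht0 : t ≠ 0 := ne_of_gt ht
  have h := ((hasDerivAt_pow 2 t).sub_const 1).sub
    (((hasDerivAt_id' t).const_mul 2).mul (hasDerivAt_log ht0))
  refine h.congr_deriv ?_
  field_simp
  ring

lemma strictMonoOn_mul_sq_log_sub :
    StrictMonoOn (fun t => 2 * t ^ 2 * log t - 3 * t ^ 2 + 4 * t - 1) (Ioi 0) := by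
  refine strictMonoOn_Ioi_of_hasDerivAt_pos_of_ne one_pos
    (g' := fun t => 4 * (t * log t - t + 1)) (fun t ht => ?_)
    fun t ht ht1 => by linarith [sub_one_lt_mul_log ht ht1]
  have ht0 : t ≠ 0 := ne_of_gt ht
  have h := ((((hasDerivAt_pow 2 t).const_mul 2).mul (hasDerivAt_log ht0)).sub
    ((hasDerivAt_pow 2 t).const_mul 3) |>.add ((hasDerivAt_id' t).const_mul 4)).sub_const 1
  refine h.congr_deriv ?_
  field_simp
  ring

noncomputable def phiRatio (t : ℝ) : ℝ :=
  if t = 1 then 2 else (2 * t ^ 2 * log t - t ^ 2 + 1) / (t - 1) ^ 2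

lemma phiRatio_sub_two {t : ℝ} (ht1 : t ≠ 1) :
    phiRatio t - 2 = (2 * t ^ 2 * log t - 3 * t ^ 2 + 4 * t - 1) / (t - 1) ^ 2 := by
  have hne : t - 1 ≠ 0 := sub_ne_zero.2 ht1
  rw [phiRatio, if_neg ht1]
  field_simp
  ring

lemma hasDerivAt_phiRatio {t : ℝ} (ht : 0 < t) (ht1 : t ≠ 1) :
    HasDerivAt phiRatio (2 * (t ^ 2 - 1 - 2 * t * log t) / (t - 1) ^ 3) t := by
  have hne : t - 1 ≠ 0 := sub_ne_zero.2 ht1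
  have hquot : HasDerivAt (fun s => (2 * s ^ 2 * log s - s ^ 2 + 1) / (s - 1) ^ 2)
      (2 * (t ^ 2 - 1 - 2 * t * log t) / (t - 1) ^ 3) t := by
    have hnum : HasDerivAt (fun s => 2 * s ^ 2 * log s - s ^ 2 + 1) (4 * t * log t) t := by
      refine ((((hasDerivAt_pow 2 t).const_mul 2).mul (hasDerivAt_log ht.ne')).sub
        (hasDerivAt_pow 2 t)).add_const 1 |>.congr_deriv ?_
      field_simp
      ring
    have hden : HasDerivAt (fun s => (s - 1) ^ 2) (2 * (t - 1)) t := by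
      refine (((hasDerivAt_id' t).sub_const 1).pow 2).congr_deriv ?_
      norm_num
    refine (hnum.div hden (pow_ne_zero 2 hne)).congr_deriv ?_
    field_simp
    ring
  refine hquot.congr_of_eventuallyEq ?_
  filter_upwards [isOpen_ne.mem_nhds ht1] with s hs
  exact if_neg hs

lemma strictMonoOn_phiRatio : StrictMonoOn phiRatio (Ioi 0) := by
  have hone : (1 : ℝ) ∈ Ioi 0 := mem_Ioi.2 one_pos
  have hphi1 : phiRatio 1 = 2 := if_pos rfl
  refine strictMonoOn_Ioi_of_Ioo_of_Ioi one_pos ?_ ?_ (fun t ht => ?_) fun t (ht : 1 < t) => ?_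
  · refine strictMonoOn_of_hasDerivAt_pos_of_isOpen (convex_Ioo 0 1) isOpen_Ioo
      (fun t ht => hasDerivAt_phiRatio ht.1 ht.2.ne) fun t ht => ?_
    have hG := strictMonoOn_sq_sub_one_sub_mul_log ht.1 hone ht.2
    norm_num at hG
    exact div_pos_of_neg_of_neg (by linarith) (Odd.pow_neg (by decide) (by linarith [ht.2]))
  · refine strictMonoOn_of_hasDerivAt_pos_of_isOpen (convex_Ioi 1) isOpen_Ioi
      (fun t ht => hasDerivAt_phiRatio (one_pos.trans ht) ht.ne') fun t (ht : 1 < t) => ?_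
    have hG := strictMonoOn_sq_sub_one_sub_mul_log hone (mem_Ioi.2 (one_pos.trans ht)) ht
    norm_num at hG
    exact div_pos (by linarith) (pow_pos (by linarith) 3)
  · have hH := strictMonoOn_mul_sq_log_sub ht.1 hone ht.2
    norm_num at hH
    rw [hphi1, ← sub_neg, phiRatio_sub_two ht.2.ne]
    exact div_neg_of_neg_of_pos (by linarith) (sq_pos_of_neg (by linarith [ht.2]))
  · have hH := strictMonoOn_mul_sq_log_sub hone (mem_Ioi.2 (one_pos.trans ht)) ht
    norm_num at hH
    rw [hphi1, ← sub_pos, phiRatio_sub_two ht.ne']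
    exact div_pos (by linarith) (pow_pos (by linarith) 2)

lemma phi_eq_phiRatio {x y : ℝ} (hx : 0 < x) (hy : 0 < y) : phi x y = phiRatio (√x / √y) := by
  have hsx : 0 < √x := sqrt_pos.2 hx
  have hsy : 0 < √y := sqrt_pos.2 hy
  by_cases hxy : x = y
  · rw [phi, if_pos hxy, hxy, div_self hsy.ne', phiRatio, if_pos rfl]
  have hsne : √x ≠ √y := (sqrt_inj hx.le hy.le).not.2 hxy
  have hsub : √x - √y ≠ 0 := sub_ne_zero.2 hsne
  have hlog : log (√x / √y) = (log x - log y) / 2 := by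
    rw [log_div hsx.ne' hsy.ne', log_sqrt hx.le, log_sqrt hy.le]
    ring
  rw [phi, if_neg hxy, phiRatio, if_neg (div_ne_one_of_ne hsne), hlog, div_pow, sq_sqrt hx.le,
    sq_sqrt hy.le, div_sub_one hsy.ne', div_pow, sq_sqrt hy.le]
  field_simp
  ring

theorem phi_strictMonoOn_fst (y : ℝ) (hy : 0 < y) :
    StrictMonoOn (fun x => phi x y) (Set.Ioi 0) := by
  have hsy : 0 < √y := sqrt_pos.2 hy
  have hmono : StrictMonoOn (fun x => √x / √y) (Ioi 0) := fun a ha _ _ hab =>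
    div_lt_div_of_pos_right (sqrt_lt_sqrt (le_of_lt ha) hab) hsy
  have hmaps : MapsTo (fun x => √x / √y) (Ioi 0) (Ioi 0) := fun x hx =>
    div_pos (sqrt_pos.2 hx) hsy
  exact (strictMonoOn_phiRatio.comp hmono hmaps).congr fun x hx => (phi_eq_phiRatio hx hy).symm
end

section
/- Let Ω ⊂ ℝ^d be a measurable set and ρ, ρ∞ : Ω → [0,∞) be integrable with ∫ρ > 0 or ∫ρ∞ > 0. Then the relative entropy E(ρ|ρ∞) = ∫_Ω (ρ log(ρ/ρ∞) − (ρ − ρ∞)) dx satisfies E(ρ|ρ∞) ≥ (3 / (2‖ρ‖_{L¹} + 4‖ρ∞‖_{L¹})) · ‖ρ − ρ∞‖²_{L¹}. -/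
open MeasureTheory Real Set InformationTheory

/-! With `t = a / b`, the integrand is `b * klFun t`, and `3 (t - 1)² ≤ (2t + 4) klFun t` because
the difference vanishes at `t = 1`, where its derivative `4 ((t + 1) log t - 2 (t - 1))` changes
sign from negative to positive. Instead of Cauchy–Schwarz, the inequality is integrated in the
linearised form `s |a - b| - s² (2a + 4b) / 12 ≤ a log (a / b) - (a - b)`, valid for every `s`;
the choice `s = 6 ‖ρ - ρ∞‖ / (2 ‖ρ‖ + 4 ‖ρ∞‖)` then gives the theorem. -/

lemma monotoneOn_add_one_mul_log_sub_two_mul_sub_one :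
    MonotoneOn (fun t : ℝ => (t + 1) * log t - 2 * (t - 1)) (Ioi 0) := by
  have hderiv : ∀ t ∈ Ioi (0 : ℝ),
      HasDerivAt (fun t => (t + 1) * log t - 2 * (t - 1)) (log t + t⁻¹ - 1) t := by
    intro t (ht : 0 < t)
    have h := (((hasDerivAt_id' t).add_const 1).mul (hasDerivAt_log ht.ne')).sub
      (((hasDerivAt_id' t).sub_const 1).const_mul 2)
    refine h.congr_deriv ?_
    field_simp
    ring
  refine monotoneOn_of_deriv_nonneg (convex_Ioi 0)
    (fun t ht => (hderiv t ht).continuousAt.continuousWithinAt) ?_ ?_ <;>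
    rw [interior_Ioi]
  · exact fun t ht => (hderiv t ht).differentiableAt.differentiableWithinAt
  · intro t ht
    rw [(hderiv t ht).deriv]
    linarith [one_sub_inv_le_log_of_pos (mem_Ioi.mp ht)]

lemma add_one_mul_log_le_two_mul_sub_one {t : ℝ} (h₀ : 0 < t) (h₁ : t ≤ 1) :
    (t + 1) * log t ≤ 2 * (t - 1) := by
  have := monotoneOn_add_one_mul_log_sub_two_mul_sub_one h₀ (mem_Ioi.mpr one_pos) h₁
  simp only [log_one] at this
  linarith

lemma two_mul_sub_one_le_add_one_mul_log {t : ℝ} (h₁ : 1 ≤ t) :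
    2 * (t - 1) ≤ (t + 1) * log t := by
  have := monotoneOn_add_one_mul_log_sub_two_mul_sub_one (mem_Ioi.mpr one_pos)
    (mem_Ioi.mpr (one_pos.trans_le h₁)) h₁
  simp only [log_one] at this
  linarith

lemma three_mul_sq_sub_one_le_mul_klFun {t : ℝ} (ht : 0 ≤ t) :
    3 * (t - 1) ^ 2 ≤ (2 * t + 4) * klFun t := by
  set F : ℝ → ℝ := fun t => (2 * t + 4) * klFun t - 3 * (t - 1) ^ 2
  have hF : Continuous F := by fun_prop [continuous_klFun]
  have hderiv : ∀ t, 0 < t → HasDerivAt F (4 * ((t + 1) * log t - 2 * (t - 1))) t := by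
    intro t ht
    have h := ((((hasDerivAt_id' t).const_mul 2).add_const 4).mul
      (hasDerivAt_klFun ht.ne')).sub ((((hasDerivAt_id' t).sub_const 1).pow 2).const_mul 3)
    refine h.congr_deriv ?_
    rw [klFun_apply]
    ring
  have hmin : IsMinOn F (Ici 0) 1 := by
    refine isMinOn_Ici_of_deriv hF.continuousAt hF.continuousAt
      (fun t ht => (hderiv t ht.1).differentiableAt.differentiableWithinAt)
      (fun t ht => (hderiv t (one_pos.trans ht)).differentiableAt.differentiableWithinAt)
      (fun t ht => ?_) (fun t ht => ?_)
    · rw [(hderiv t ht.1).deriv]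
      linarith [add_one_mul_log_le_two_mul_sub_one ht.1 ht.2.le]
    · rw [(hderiv t (one_pos.trans ht)).deriv]
      linarith [two_mul_sub_one_le_add_one_mul_log (le_of_lt ht)]
  have : F 1 ≤ F t := isMinOn_iff.mp hmin t ht
  simp only [F, klFun_one] at this
  linarith

lemma three_mul_sq_sub_le_mul_log_div {a b : ℝ} (ha : 0 ≤ a) (hb : 0 < b) :
    3 * (a - b) ^ 2 ≤ (2 * a + 4 * b) * (a * log (a / b) - (a - b)) := by
  calc 3 * (a - b) ^ 2 = b ^ 2 * (3 * (a / b - 1) ^ 2) := by field_simp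
    _ ≤ b ^ 2 * ((2 * (a / b) + 4) * klFun (a / b)) :=
      mul_le_mul_of_nonneg_left (three_mul_sq_sub_one_le_mul_klFun (div_nonneg ha hb.le))
        (sq_nonneg b)
    _ = (2 * a + 4 * b) * (a * log (a / b) - (a - b)) := by
      rw [klFun_apply]
      field_simp
      ring

lemma mul_abs_sub_sub_le_mul_log_div {a b : ℝ} (ha : 0 ≤ a) (hb : 0 < b) (s : ℝ) :
    s * |a - b| - s ^ 2 * (2 * a + 4 * b) / 12 ≤ a * log (a / b) - (a - b) := by
  have hw : 0 < 2 * a + 4 * b := by linarith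
  have hpinsker := three_mul_sq_sub_le_mul_log_div ha hb
  -- AM-GM: `12 s |a - b| w ≤ s² w² + 36 (a - b)²`, with `w = 2a + 4b`
  have hamgm := sq_nonneg (6 * |a - b| - s * (2 * a + 4 * b))
  rw [← mul_le_mul_iff_of_pos_right hw]
  nlinarith [sq_abs (a - b)]

theorem three_div_mul_sq_integral_abs_sub_le {α : Type*} [MeasurableSpace α] {μ : Measure α}
    {f g : α → ℝ} (hf : ∀ᵐ x ∂μ, 0 ≤ f x) (hg : ∀ᵐ x ∂μ, 0 < g x)
    (hfi : Integrable f μ) (hgi : Integrable g μ)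
    (hE : Integrable (fun x => f x * log (f x / g x) - (f x - g x)) μ) :
    3 / (2 * ∫ x, f x ∂μ + 4 * ∫ x, g x ∂μ) * (∫ x, |f x - g x| ∂μ) ^ 2
      ≤ ∫ x, (f x * log (f x / g x) - (f x - g x)) ∂μ := by
  set w := 2 * ∫ x, f x ∂μ + 4 * ∫ x, g x ∂μ
  set M := ∫ x, |f x - g x| ∂μ
  set s := 6 * M / w
  have hwi : Integrable (fun x => 2 * f x + 4 * g x) μ :=
    (hfi.const_mul 2).add (hgi.const_mul 4)
  have habsi : Integrable (fun x => |f x - g x|) μ := (hfi.sub hgi).abs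
  have hminorant : ∫ x, (s * |f x - g x| - s ^ 2 * (2 * f x + 4 * g x) / 12) ∂μ
      = s * M - s ^ 2 * w / 12 := by
    rw [integral_sub (habsi.const_mul s) ((hwi.const_mul _).div_const 12), integral_const_mul,
      integral_div, integral_const_mul, integral_add (hfi.const_mul 2) (hgi.const_mul 4),
      integral_const_mul, integral_const_mul]
  have hoptimal : s * M - s ^ 2 * w / 12 = 3 / w * M ^ 2 := by
    rcases eq_or_ne w 0 with hw | hw
    · -- junk values: `s = 6 * M / 0 = 0` and `3 / 0 = 0`
      simp [s, hw]
    · simp only [s]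
      field_simp
      ring
  rw [← hoptimal, ← hminorant]
  refine integral_mono_ae ((habsi.const_mul s).sub ((hwi.const_mul _).div_const 12)) hE ?_
  filter_upwards [hf, hg] with x hfx hgx
  exact mul_abs_sub_sub_le_mul_log_div hfx hgx s

theorem csiszar_kullback_pinsker_general {d : ℕ}
    (Ω : Set (EuclideanSpace ℝ (Fin d))) (hΩ : MeasurableSet Ω)
    (ρ ρinf : EuclideanSpace ℝ (Fin d) → ℝ)
    (hρ : ∀ x ∈ Ω, 0 ≤ ρ x) (hρinf : ∀ x ∈ Ω, 0 < ρinf x)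
    (hintρ : IntegrableOn ρ Ω) (hintρinf : IntegrableOn ρinf Ω)
    (hintE : IntegrableOn
      (fun x => ρ x * Real.log (ρ x / ρinf x) - (ρ x - ρinf x)) Ω) :
    (3 / (2 * (∫ x in Ω, ρ x) + 4 * (∫ x in Ω, ρinf x))) *
        (∫ x in Ω, |ρ x - ρinf x|) ^ 2
      ≤ ∫ x in Ω, (ρ x * Real.log (ρ x / ρinf x) - (ρ x - ρinf x)) :=
  three_div_mul_sq_integral_abs_sub_le (ae_restrict_of_forall_mem hΩ hρ)
    (ae_restrict_of_forall_mem hΩ hρinf) hintρ hintρinf hintE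

/-- Generalized Csiszár–Kullback–Pinsker inequality for nonnegative integrable
functions that need not be probability densities. -/
theorem csiszar_kullback_pinsker {d : ℕ}
    (Ω : Set (EuclideanSpace ℝ (Fin d))) (hΩ : MeasurableSet Ω)
    (ρ ρinf : EuclideanSpace ℝ (Fin d) → ℝ)
    (hρ : ∀ x ∈ Ω, 0 ≤ ρ x) (hρinf : ∀ x ∈ Ω, 0 < ρinf x)
    (hintρ : IntegrableOn ρ Ω) (hintρinf : IntegrableOn ρinf Ω)
    (hintE : IntegrableOn
      (fun x => ρ x * Real.log (ρ x / ρinf x) - (ρ x - ρinf x)) Ω)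
    (hpos : 0 < (∫ x in Ω, ρ x) ∨ 0 < (∫ x in Ω, ρinf x)) :
    (3 / (2 * (∫ x in Ω, ρ x) + 4 * (∫ x in Ω, ρinf x))) *
        (∫ x in Ω, |ρ x - ρinf x|) ^ 2
      ≤ ∫ x in Ω, (ρ x * Real.log (ρ x / ρinf x) - (ρ x - ρinf x)) :=
  csiszar_kullback_pinsker_general Ω hΩ ρ ρinf hρ hρinf hintρ hintρinf hintE
end

section
/- For all ρ, ρ∞ ∈ (0,1), the pointwise inequality −((1−ρ) − (ρ/ρ∞)(1−ρ∞))·(log(ρ/ρ∞) − log((1−ρ)/(1−ρ∞))) ≥ min{1, (1−ρ∞)/ρ∞} · (ρ log(ρ/ρ∞) + (1−ρ) log((1−ρ)/(1−ρ∞))) + 2(ρ−ρ∞)²/ρ∞ holds. -/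
/-!
Writing `t = ρ - ρ∞`, the left-hand side is `t / ρ∞ · (logit ρ - logit ρ∞)`. Since
`logit' x = 1 / (x (1 - x)) ≥ 4`, it is at least `4 t² / ρ∞`. On the other side, `log u ≤ u - 1`
bounds the relative entropy by the χ²-distance `t² / (ρ∞ (1 - ρ∞))`, and
`min 1 ((1 - ρ∞) / ρ∞) ≤ 2 (1 - ρ∞)`, so the first term on the right is at most `2 t² / ρ∞`.
-/

open Real Set

noncomputable def logit (x : ℝ) : ℝ := log x - log (1 - x)

lemma hasDerivAt_logit {x : ℝ} (hx : x ∈ Ioo (0 : ℝ) 1) :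
    HasDerivAt logit (x⁻¹ + (1 - x)⁻¹) x := by
  have hlog_one_sub : HasDerivAt (fun y => log (1 - y)) (-(1 - x)⁻¹) x := by
    simpa [div_eq_mul_inv] using ((hasDerivAt_id x).const_sub 1).log (sub_pos.2 hx.2).ne'
  rw [← sub_neg_eq_add]
  exact (hasDerivAt_log hx.1.ne').fun_sub hlog_one_sub

lemma monotoneOn_logit_sub_four_mul : MonotoneOn (fun x => logit x - 4 * x) (Ioo 0 1) := by
  have hderiv : ∀ x ∈ Ioo (0 : ℝ) 1,
      HasDerivAt (fun x => logit x - 4 * x) (x⁻¹ + (1 - x)⁻¹ - 4) x := fun x hx => by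
    simpa using (hasDerivAt_logit hx).fun_sub ((hasDerivAt_id' x).const_mul 4)
  refine monotoneOn_of_hasDerivWithinAt_nonneg (convex_Ioo 0 1)
    (fun x hx => (hderiv x hx).continuousAt.continuousWithinAt)
    (fun x hx => (hderiv x (interior_subset hx)).hasDerivWithinAt) fun x hx => ?_
  rw [interior_Ioo] at hx
  have hx₀ : 0 < x := hx.1
  have hx₁ : 0 < 1 - x := sub_pos.2 hx.2
  have hsq : x⁻¹ + (1 - x)⁻¹ - 4 = (1 - 2 * x) ^ 2 / (x * (1 - x)) := by
    field_simp
    ring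
  rw [hsq]
  positivity

lemma four_mul_sq_le_sub_mul_logit_sub {x y : ℝ} (hx : x ∈ Ioo (0 : ℝ) 1)
    (hy : y ∈ Ioo (0 : ℝ) 1) : 4 * (x - y) ^ 2 ≤ (x - y) * (logit x - logit y) := by
  have h := (monovaryOn_id_iff.2 monotoneOn_logit_sub_four_mul).sub_mul_sub_nonneg hy hx
  simp only [id] at h
  linear_combination h

lemma mul_log_div_le {a b : ℝ} (ha : 0 ≤ a) (hb : 0 < b) :
    a * log (a / b) ≤ (a - b) ^ 2 / b + (a - b) := by
  rcases ha.eq_or_lt with rfl | ha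
  · simp [sq, hb.ne']
  calc a * log (a / b) ≤ a * (a / b - 1) :=
        mul_le_mul_of_nonneg_left (log_le_sub_one_of_pos (by positivity)) ha.le
    _ = (a - b) ^ 2 / b + (a - b) := by
        field_simp
        ring

lemma binary_relEntropy_le_chiSq {p q : ℝ} (hp : p ∈ Icc (0 : ℝ) 1) (hq : q ∈ Ioo (0 : ℝ) 1) :
    p * log (p / q) + (1 - p) * log ((1 - p) / (1 - q)) ≤ (p - q) ^ 2 / (q * (1 - q)) := by
  have hq₁ : 0 < 1 - q := sub_pos.2 hq.2
  have h₀ := mul_log_div_le hp.1 hq.1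
  have h₁ := mul_log_div_le (sub_nonneg.2 hp.2) hq₁
  have hsum : (p - q) ^ 2 / q + (p - q) + ((1 - p - (1 - q)) ^ 2 / (1 - q) + (1 - p - (1 - q)))
      = (p - q) ^ 2 / (q * (1 - q)) := by
    field_simp [hq.1.ne', hq₁.ne']
    ring
  linarith

lemma min_one_div_le_two_mul {q : ℝ} (hq₀ : 0 < q) (hq₁ : q ≤ 1) :
    min 1 ((1 - q) / q) ≤ 2 * (1 - q) := by
  rcases le_total q (1 / 2) with hq | hq
  · exact (min_le_left _ _).trans (by linarith)
  · refine (min_le_right _ _).trans ?_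
    rw [div_le_iff₀ hq₀]
    nlinarith

lemma min_mul_binary_relEntropy_le {p q : ℝ} (hp : p ∈ Icc (0 : ℝ) 1) (hq : q ∈ Ioo (0 : ℝ) 1) :
    min 1 ((1 - q) / q) * (p * log (p / q) + (1 - p) * log ((1 - p) / (1 - q)))
      ≤ 2 * (p - q) ^ 2 / q := by
  have hq₁ : 0 < 1 - q := sub_pos.2 hq.2
  calc min 1 ((1 - q) / q) * (p * log (p / q) + (1 - p) * log ((1 - p) / (1 - q)))
      ≤ min 1 ((1 - q) / q) * ((p - q) ^ 2 / (q * (1 - q))) :=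
        mul_le_mul_of_nonneg_left (binary_relEntropy_le_chiSq hp hq)
          (le_min zero_le_one (div_nonneg hq₁.le hq.1.le))
    _ ≤ 2 * (1 - q) * ((p - q) ^ 2 / (q * (1 - q))) :=
        mul_le_mul_of_nonneg_right (min_one_div_le_two_mul hq.1 hq.2.le)
          (div_nonneg (sq_nonneg _) (mul_pos hq.1 hq₁).le)
    _ = 2 * (p - q) ^ 2 / q := by
        field_simp [hq₁.ne']

/-- Pointwise entropy dissipation inequality for the nonlinear reaction term. -/
theorem dissipation_pointwise (ρ ρinf : ℝ) (hρ : ρ ∈ Set.Ioo (0:ℝ) 1)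
    (hρinf : ρinf ∈ Set.Ioo (0:ℝ) 1) :
    -(((1 - ρ) - ρ / ρinf * (1 - ρinf)) *
        (Real.log (ρ / ρinf) - Real.log ((1 - ρ) / (1 - ρinf))))
      ≥ min 1 ((1 - ρinf) / ρinf) *
          (ρ * Real.log (ρ / ρinf) + (1 - ρ) * Real.log ((1 - ρ) / (1 - ρinf)))
        + 2 * (ρ - ρinf) ^ 2 / ρinf := by
  obtain ⟨hρ₀, hρ₁⟩ := hρ
  obtain ⟨hq₀, hq₁⟩ := hρinf
  have hlhs : -(((1 - ρ) - ρ / ρinf * (1 - ρinf)) *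
      (log (ρ / ρinf) - log ((1 - ρ) / (1 - ρinf))))
      = (ρ - ρinf) * (logit ρ - logit ρinf) / ρinf := by
    rw [log_div hρ₀.ne' hq₀.ne', log_div (sub_pos.2 hρ₁).ne' (sub_pos.2 hq₁).ne', logit, logit]
    field_simp
    ring
  have hdiss : 4 * (ρ - ρinf) ^ 2 / ρinf ≤ (ρ - ρinf) * (logit ρ - logit ρinf) / ρinf :=
    div_le_div_of_nonneg_right (four_mul_sq_le_sub_mul_logit_sub ⟨hρ₀, hρ₁⟩ ⟨hq₀, hq₁⟩) hq₀.le
  have hentropy := min_mul_binary_relEntropy_le ⟨hρ₀.le, hρ₁.le⟩ ⟨hq₀, hq₁⟩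
  rw [ge_iff_le, hlhs]
  linarith [show 4 * (ρ - ρinf) ^ 2 / ρinf = 2 * (ρ - ρinf) ^ 2 / ρinf + 2 * (ρ - ρinf) ^ 2 / ρinf
    by ring]
end
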